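/- arXiv:math/0105032 — 5 statements merged into one kernel-verified Lean document; each statement's English description precedes it below -/
import Mathlib

section
/- Let m ≥ 1 be an integer and h a nonzero complex number. In the ring R = ℂ[X]/(X^{m+1}), with x the image of X, each element x + k·h with k ≥ 1 an integer is a unit. Define a_0 = 1 and, for d ≥ 1, a_d = (∏_{k=1}^{d} (x + k·h))^{-(m+1)} ∈ R, and let J = ∑_{d≥0} a_d q^d ∈ R[[q]]. Let D : R[[q]] → R[[q]] be the ℂ-linear operator sending a power series F = ∑_d c_d q^d to ∑_d (x + d·h)·c_d q^d (the operator x + h·q·d/dq). Then D^{m+1} J = q·J; that is, the cohomology-valued hypergeometric series J(t) = ∑_{d≥0} q^{x/h+d}/[(x+h)(x+2h)⋯(x+dh)]^{m+1} solves the quantum differential equation (h q d/dq)^{m+1} J = q J of ℂP^m. -/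
/-!
The operator `D` is diagonal on monomials: it multiplies the coefficient of `q^d` by the weight
`w d = x + d h`, so `D^{m+1}` multiplies it by `w d ^ (m+1)`. The coefficients `a_d` are built so
that `w (d+1) ^ (m+1) * a (d+1) = a d`, which is the coefficient of `q^{d+1}` in `D^{m+1} J = q J`;
for `q^0` both sides vanish because `w 0 ^ (m+1) = x ^ (m+1) = 0`. The weights `w k`, `k ≥ 1`, are
units since they are a nonzero scalar plus the nilpotent `x`.
-/

/-- The cohomology ring `H^*(ℂPᵐ;ℂ) = ℂ[X]/(X^{m+1})`. -/
noncomputable abbrev ProjCohomology (m : ℕ) : Type :=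
  Polynomial ℂ ⧸ Ideal.span {(Polynomial.X : Polynomial ℂ) ^ (m + 1)}

/-- The image of `X`, a generator of `H²`. -/
noncomputable abbrev projX (m : ℕ) : ProjCohomology m :=
  Ideal.Quotient.mk _ Polynomial.X

open PowerSeries

section DiagonalOperator

variable {R : Type*} [CommRing R] (w : ℕ → R)

theorem coeff_iterate_of_coeff_eq_mul {D : R⟦X⟧ → R⟦X⟧}
    (hD : ∀ F d, coeff d (D F) = w d * coeff d F) (n : ℕ) (F : R⟦X⟧) (d : ℕ) :
    coeff d (D^[n] F) = w d ^ n * coeff d F := by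
  induction n with
  | zero => simp
  | succ n ih => rw [Function.iterate_succ_apply', hD, ih, pow_succ', mul_assoc]

theorem pow_mul_inverse_prod_range_succ (hw : ∀ k, IsUnit (w (k + 1))) (n d : ℕ) :
    w (d + 1) ^ n * Ring.inverse ((∏ k ∈ Finset.range (d + 1), w (k + 1)) ^ n)
      = Ring.inverse ((∏ k ∈ Finset.range d, w (k + 1)) ^ n) := by
  rw [Finset.prod_range_succ, mul_pow, Ring.mul_inverse_rev,
    Ring.mul_inverse_cancel_left _ _ ((hw d).pow n)]

theorem iterate_mk_inverse_prod_eq_X_mul (n : ℕ) (hw₀ : w 0 ^ n = 0)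
    (hw : ∀ k, IsUnit (w (k + 1))) {D : R⟦X⟧ → R⟦X⟧}
    (hD : ∀ F d, coeff d (D F) = w d * coeff d F) :
    D^[n] (mk fun d ↦ Ring.inverse ((∏ k ∈ Finset.range d, w (k + 1)) ^ n))
      = X * mk fun d ↦ Ring.inverse ((∏ k ∈ Finset.range d, w (k + 1)) ^ n) := by
  ext (_ | d)
  · rw [coeff_iterate_of_coeff_eq_mul w hD, hw₀, zero_mul, coeff_zero_X_mul]
  · rw [coeff_iterate_of_coeff_eq_mul w hD, coeff_succ_X_mul, coeff_mk, coeff_mk,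
      pow_mul_inverse_prod_range_succ w hw]

end DiagonalOperator

theorem projX_pow_succ (m : ℕ) : projX m ^ (m + 1) = 0 := by
  rw [← map_pow, Ideal.Quotient.eq_zero_iff_mem]
  exact Ideal.subset_span rfl

theorem isUnit_projX_add_algebraMap (m : ℕ) {c : ℂ} (hc : c ≠ 0) :
    IsUnit (projX m + algebraMap ℂ (ProjCohomology m) c) :=
  IsNilpotent.isUnit_add_right_of_commute ⟨m + 1, projX_pow_succ m⟩
    ((isUnit_iff_ne_zero.mpr hc).map _) (Commute.all _ _)

theorem stmt_0_general (m : ℕ) (h : ℂ) (hh : h ≠ 0)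
    -- the coefficients `a_d = (∏_{k=1}^d (x + k h))^{-(m+1)}` (so that `a_0 = 1`)
    (a : ℕ → ProjCohomology m)
    (ha : ∀ d : ℕ, a d = Ring.inverse
      ((∏ k ∈ Finset.range d,
        (projX m + algebraMap ℂ (ProjCohomology m) (((k : ℂ) + 1) * h))) ^ (m + 1)))
    -- the operator `D = x + h q d/dq`, acting coefficientwise by `x + d·h`
    (D : PowerSeries (ProjCohomology m) → PowerSeries (ProjCohomology m))
    (hD : ∀ (F : PowerSeries (ProjCohomology m)) (d : ℕ),
      PowerSeries.coeff (R := ProjCohomology m) d (D F)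
        = (projX m + algebraMap ℂ (ProjCohomology m) ((d : ℂ) * h))
            * PowerSeries.coeff (R := ProjCohomology m) d F) :
    -- each `x + k·h` with `k ≥ 1` is a unit, and `D^{m+1} J = q J`
    (∀ k : ℕ, 1 ≤ k →
      IsUnit (projX m + algebraMap ℂ (ProjCohomology m) ((k : ℂ) * h))) ∧
    D^[m + 1] (PowerSeries.mk a) = PowerSeries.X * PowerSeries.mk a := by
  set w : ℕ → ProjCohomology m := fun d ↦ projX m + algebraMap ℂ _ ((d : ℂ) * h)
  have hw : ∀ k, IsUnit (w (k + 1)) := fun k ↦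
    isUnit_projX_add_algebraMap m (mul_ne_zero (Nat.cast_ne_zero.mpr k.succ_ne_zero) hh)
  have hw₀ : w 0 ^ (m + 1) = 0 := by simpa [w] using projX_pow_succ m
  have ha' : a = fun d ↦ Ring.inverse ((∏ k ∈ Finset.range d, w (k + 1)) ^ (m + 1)) := by
    funext d
    simp only [ha, w, Nat.cast_add_one]
  refine ⟨fun k hk ↦ ?_, ha' ▸ iterate_mk_inverse_prod_eq_X_mul w (m + 1) hw₀ hw hD⟩
  obtain ⟨k, rfl⟩ := Nat.exists_eq_add_of_le' hk
  exact hw k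

theorem stmt_0 (m : ℕ) (hm : 1 ≤ m) (h : ℂ) (hh : h ≠ 0)
    -- the coefficients `a_d = (∏_{k=1}^d (x + k h))^{-(m+1)}` (so that `a_0 = 1`)
    (a : ℕ → ProjCohomology m)
    (ha : ∀ d : ℕ, a d = Ring.inverse
      ((∏ k ∈ Finset.range d,
        (projX m + algebraMap ℂ (ProjCohomology m) (((k : ℂ) + 1) * h))) ^ (m + 1)))
    -- the operator `D = x + h q d/dq`, acting coefficientwise by `x + d·h`
    (D : PowerSeries (ProjCohomology m) → PowerSeries (ProjCohomology m))
    (hD : ∀ (F : PowerSeries (ProjCohomology m)) (d : ℕ),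
      PowerSeries.coeff (R := ProjCohomology m) d (D F)
        = (projX m + algebraMap ℂ (ProjCohomology m) ((d : ℂ) * h))
            * PowerSeries.coeff (R := ProjCohomology m) d F) :
    -- each `x + k·h` with `k ≥ 1` is a unit, and `D^{m+1} J = q J`
    (∀ k : ℕ, 1 ≤ k →
      IsUnit (projX m + algebraMap ℂ (ProjCohomology m) ((k : ℂ) * h))) ∧
    D^[m + 1] (PowerSeries.mk a) = PowerSeries.X * PowerSeries.mk a :=
  stmt_0_general m h hh a ha D hD
end

section
/- Let h be a nonzero complex number and R = ℂ[a,b]/(a² − ab + b², a²b − ab²). For integers d₁, d₂ ≥ 0 set a_{d₁,d₂} = (∏_{m=1}^{d₁+d₂} (a + b + m·h)) · (∏_{m=1}^{d₁} (a + m·h))^{-3} · (∏_{m=1}^{d₂} (b + m·h))^{-3} ∈ R, and set a_{d₁,d₂} = 0 if d₁ < 0 or d₂ < 0. Let J = ∑_{d₁,d₂≥0} a_{d₁,d₂} q₁^{d₁} q₂^{d₂} ∈ R[[q₁,q₂]], and let E_a, E_b : R[[q₁,q₂]] → R[[q₁,q₂]] be the ℂ-linear operators multiplying the coefficient of q₁^{d₁}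 q₂^{d₂} by (a + d₁·h) and by (b + d₂·h) respectively. Then (E_a² + E_b² − E_a E_b) J = (q₁ + q₂)·J; equivalently, for all d₁, d₂ ≥ 0 not both zero, a_{d₁,d₂}·((a+d₁h)² + (b+d₂h)² − (a+d₁h)(b+d₂h)) = a_{d₁−1,d₂} + a_{d₁,d₂−1}. This is the first quantum differential equation D₁J = 0 of the flag manifold F₃, where D₁ = h²∂₁² + h²∂₂² − h²∂₁∂₂ − q₁ − q₂. -/
/-!
Write `u = a + d₁h`, `v = b + d₂h`. Peeling off the last factors of the products gives
`a_{d₁,d₂} u³ = a_{d₁-1,d₂} (u + v)` and `a_{d₁,d₂} v³ = a_{d₁,d₂-1} (u + v)`; for `d₁ = 0`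
(resp. `d₂ = 0`) both sides vanish because `a³ = b³ = 0`. Adding, and cancelling the unit
`u + v = a + b + (d₁ + d₂)h` from `u³ + v³ = (u + v)(u² − uv + v²)`, gives the recursion; at
`d₁ = d₂ = 0` it is the relation `a² − ab + b² = 0`. The equation for `J` is the recursion
read off coefficientwise.
-/

/-- The cohomology ring `H^*(F₃;ℂ) = ℂ[a,b]/(a² − ab + b², a²b − ab²)` of the full flag
manifold `F₃ = F_{1,2}(ℂ³)`. -/
noncomputable abbrev FlagCohomology : Type :=
  MvPolynomial (Fin 2) ℂ ⧸ Ideal.span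
    {(MvPolynomial.X 0 : MvPolynomial (Fin 2) ℂ) ^ 2
        - MvPolynomial.X 0 * MvPolynomial.X 1 + MvPolynomial.X 1 ^ 2,
      (MvPolynomial.X 0 : MvPolynomial (Fin 2) ℂ) ^ 2 * MvPolynomial.X 1
        - MvPolynomial.X 0 * MvPolynomial.X 1 ^ 2}

/-- The degree-two generator `a`. -/
noncomputable abbrev flagA : FlagCohomology :=
  Ideal.Quotient.mk _ (MvPolynomial.X 0)

/-- The degree-two generator `b`. -/
noncomputable abbrev flagB : FlagCohomology :=
  Ideal.Quotient.mk _ (MvPolynomial.X 1)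

open Finset

theorem IsNilpotent.isUnit_add_natCast_succ_mul {K R : Type*} [Field K] [CharZero K] [Ring R]
    [Algebra K R] {r : R} (hr : IsNilpotent r) {h : K} (hh : h ≠ 0) (n : ℕ) :
    IsUnit (r + ((n : R) + 1) * algebraMap K R h) := by
  have hz : ((n : K) + 1) * h ≠ 0 := mul_ne_zero (Nat.cast_add_one_ne_zero n) hh
  have := hr.isUnit_add_right_of_commute ((isUnit_iff_ne_zero.mpr hz).map (algebraMap K R))
    (Algebra.commutes _ _).symm
  simpa only [map_mul, map_add, map_natCast, map_one] using this

theorem MvPowerSeries.coeff_X_mul_eq_ite {σ R : Type*} [CommSemiring R] [DecidableEq σ]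
    (i : σ) (F : MvPowerSeries σ R) (s : σ →₀ ℕ) :
    coeff s (X i * F) = if s i = 0 then 0 else coeff (s - Finsupp.single i 1) F := by
  rw [X_def, coeff_monomial_mul, one_mul]
  split_ifs with hle hs hs
  · exact absurd (Finsupp.single_le_iff.mp hle) (by omega)
  · rfl
  · rfl
  · exact absurd (Finsupp.single_le_iff.mpr (by omega)) hle

section Relations

open MvPolynomial

theorem flagA_sq_sub_mul_add_sq : flagA ^ 2 - flagA * flagB + flagB ^ 2 = 0 := by
  have : (Ideal.Quotient.mk _ ((X 0 : MvPolynomial (Fin 2) ℂ) ^ 2 - X 0 * X 1 + X 1 ^ 2) :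
      FlagCohomology) = 0 :=
    Ideal.Quotient.eq_zero_iff_mem.mpr (Ideal.subset_span (Set.mem_insert _ _))
  simpa only [map_add, map_sub, map_mul, map_pow] using this

theorem flagA_sq_mul_sub_mul_sq : flagA ^ 2 * flagB - flagA * flagB ^ 2 = 0 := by
  have : (Ideal.Quotient.mk _ ((X 0 : MvPolynomial (Fin 2) ℂ) ^ 2 * X 1 - X 0 * X 1 ^ 2) :
      FlagCohomology) = 0 :=
    Ideal.Quotient.eq_zero_iff_mem.mpr (Ideal.subset_span (Set.mem_insert_of_mem _ rfl))
  simpa only [map_sub, map_mul, map_pow] using this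

theorem flagA_pow_three : flagA ^ 3 = 0 := by
  linear_combination flagA * flagA_sq_sub_mul_add_sq + flagA_sq_mul_sub_mul_sq

theorem flagB_pow_three : flagB ^ 3 = 0 := by
  linear_combination flagB * flagA_sq_sub_mul_add_sq - flagA_sq_mul_sub_mul_sq

end Relations

section JCoeff

variable {R : Type*} [CommRing R]

/-- The coefficient `a_{d₁,d₂}` of the J-function; `Ring.inverse` is `0` on non-units. -/
noncomputable def jCoeff (a b ħ : R) (d₁ d₂ : ℕ) : R :=
  (∏ k ∈ range (d₁ + d₂), (a + b + ((k : R) + 1) * ħ)) *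
    Ring.inverse (∏ k ∈ range d₁, (a + ((k : R) + 1) * ħ)) ^ 3 *
    Ring.inverse (∏ k ∈ range d₂, (b + ((k : R) + 1) * ħ)) ^ 3

theorem jCoeff_swap (a b ħ : R) (d₁ d₂ : ℕ) : jCoeff b a ħ d₂ d₁ = jCoeff a b ħ d₁ d₂ := by
  rw [jCoeff, jCoeff, add_comm b a, add_comm d₂ d₁, mul_right_comm]

theorem jCoeff_succ_left_mul {a b ħ : R} {d₁ : ℕ} (hu : IsUnit (a + ((d₁ : R) + 1) * ħ))
    (d₂ : ℕ) :
    jCoeff a b ħ (d₁ + 1) d₂ * (a + ((d₁ : R) + 1) * ħ) ^ 3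
      = jCoeff a b ħ d₁ d₂ * (a + b + ((d₁ : R) + d₂ + 1) * ħ) := by
  have hcube : (Ring.inverse (a + ((d₁ : R) + 1) * ħ) * (a + ((d₁ : R) + 1) * ħ)) ^ 3 = 1 := by
    rw [Ring.inverse_mul_cancel _ hu, one_pow]
  rw [jCoeff, jCoeff, add_right_comm, prod_range_succ, prod_range_succ, Ring.mul_inverse_rev]
  push_cast
  linear_combination
    ((∏ k ∈ range (d₁ + d₂), (a + b + ((k : R) + 1) * ħ)) * (a + b + ((d₁ : R) + d₂ + 1) * ħ) *
      Ring.inverse (∏ k ∈ range d₁, (a + ((k : R) + 1) * ħ)) ^ 3 *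
      Ring.inverse (∏ k ∈ range d₂, (b + ((k : R) + 1) * ħ)) ^ 3) * hcube

end JCoeff

section Recursion

variable {R : Type*} [CommRing R] {a b ħ : R} {A : ℤ → ℤ → R}

theorem coeff_mul_cube_left (ha : a ^ 3 = 0) (hua : ∀ n : ℕ, IsUnit (a + ((n : R) + 1) * ħ))
    (hA : ∀ d₁ d₂ : ℕ, A d₁ d₂ = jCoeff a b ħ d₁ d₂) (hA0 : ∀ d₂, A (-1) d₂ = 0) (d₁ d₂ : ℕ) :
    A d₁ d₂ * (a + d₁ * ħ) ^ 3 = A (d₁ - 1) d₂ * (a + b + ((d₁ : R) + d₂) * ħ) := by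
  rcases d₁ with _ | d₁
  · simp [ha, hA0]
  · rw [show ((d₁ + 1 : ℕ) : ℤ) - 1 = d₁ by push_cast; ring, hA, hA]
    push_cast
    rw [jCoeff_succ_left_mul (hua d₁)]
    ring

theorem coeff_mul_cube_right (hb : b ^ 3 = 0) (hub : ∀ n : ℕ, IsUnit (b + ((n : R) + 1) * ħ))
    (hA : ∀ d₁ d₂ : ℕ, A d₁ d₂ = jCoeff a b ħ d₁ d₂) (hA0 : ∀ d₁, A d₁ (-1) = 0) (d₁ d₂ : ℕ) :
    A d₁ d₂ * (b + d₂ * ħ) ^ 3 = A d₁ (d₂ - 1) * (a + b + ((d₁ : R) + d₂) * ħ) := by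
  have := coeff_mul_cube_left (A := fun x y => A y x) hb hub
    (fun x y => (hA y x).trans (jCoeff_swap a b ħ y x).symm) hA0 d₂ d₁
  simpa only [add_comm b a, add_comm (d₂ : R)] using this

theorem coeff_recursion (ha : a ^ 3 = 0) (hb : b ^ 3 = 0) (hab : a ^ 2 - a * b + b ^ 2 = 0)
    (hua : ∀ n : ℕ, IsUnit (a + ((n : R) + 1) * ħ))
    (hub : ∀ n : ℕ, IsUnit (b + ((n : R) + 1) * ħ))
    (huab : ∀ n : ℕ, IsUnit (a + b + ((n : R) + 1) * ħ))
    (hA : ∀ d₁ d₂ : ℕ, A d₁ d₂ = jCoeff a b ħ d₁ d₂)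
    (hA0 : ∀ d₁ d₂ : ℤ, d₁ < 0 ∨ d₂ < 0 → A d₁ d₂ = 0) (d₁ d₂ : ℕ) :
    A d₁ d₂ * ((a + d₁ * ħ) ^ 2 + (b + d₂ * ħ) ^ 2 - (a + d₁ * ħ) * (b + d₂ * ħ))
      = A (d₁ - 1) d₂ + A d₁ (d₂ - 1) := by
  have left := coeff_mul_cube_left ha hua hA (fun _ => hA0 _ _ (by omega)) d₁ d₂
  have right := coeff_mul_cube_right hb hub hA (fun _ => hA0 _ _ (by omega)) d₁ d₂
  by_cases hd : d₁ + d₂ = 0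
  · obtain ⟨rfl, rfl⟩ : d₁ = 0 ∧ d₂ = 0 := by omega
    simp only [Nat.cast_zero, zero_mul, add_zero, zero_sub, hA0 (-1) 0 (by omega),
      hA0 0 (-1) (by omega)]
    linear_combination A 0 0 * hab
  · -- `(u² + v² − uv)(u + v) = u³ + v³`, and `u + v = a + b + (d₁ + d₂)ħ` is a unit
    obtain ⟨n, hn⟩ := Nat.exists_eq_add_one_of_ne_zero hd
    have hw : IsUnit (a + b + ((d₁ : R) + d₂) * ħ) := by
      rw [← Nat.cast_add, hn, Nat.cast_succ]
      exact huab n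
    refine hw.mul_right_cancel ?_
    linear_combination left + right

section Bivariate

open MvPowerSeries

variable {R : Type*} [CommSemiring R] {A : ℤ → ℤ → R} {J : MvPowerSeries (Fin 2) R}

theorem coeff_X_zero_mul_of_coeff (hA0 : ∀ d₂, A (-1) d₂ = 0)
    (hJ : ∀ s : Fin 2 →₀ ℕ, coeff s J = A (s 0) (s 1)) (s : Fin 2 →₀ ℕ) :
    coeff s (X 0 * J) = A (s 0 - 1) (s 1) := by
  rw [coeff_X_mul_eq_ite]
  split_ifs with hs
  · rw [hs, Nat.cast_zero, zero_sub, hA0]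
  · rw [hJ, Finsupp.tsub_apply, Finsupp.tsub_apply, Finsupp.single_eq_same,
      Finsupp.single_eq_of_ne (by decide), tsub_zero, Nat.cast_sub (by omega), Nat.cast_one]

theorem coeff_X_one_mul_of_coeff (hA0 : ∀ d₁, A d₁ (-1) = 0)
    (hJ : ∀ s : Fin 2 →₀ ℕ, coeff s J = A (s 0) (s 1)) (s : Fin 2 →₀ ℕ) :
    coeff s (X 1 * J) = A (s 0) (s 1 - 1) := by
  rw [coeff_X_mul_eq_ite]
  split_ifs with hs
  · rw [hs, Nat.cast_zero, zero_sub, hA0]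
  · rw [hJ, Finsupp.tsub_apply, Finsupp.tsub_apply, Finsupp.single_eq_same,
      Finsupp.single_eq_of_ne (by decide), tsub_zero, Nat.cast_sub (by omega), Nat.cast_one]

end Bivariate
theorem stmt_4 (h : ℂ) (hh : h ≠ 0)
    -- the coefficients `a_{d₁,d₂}`, extended by zero to negative indices
    (A : ℤ → ℤ → FlagCohomology)
    (hA : ∀ d₁ d₂ : ℕ, A d₁ d₂ =
      (∏ k ∈ Finset.range (d₁ + d₂),
          (flagA + flagB + algebraMap ℂ FlagCohomology (((k : ℂ) + 1) * h))) *
        Ring.inverse (∏ k ∈ Finset.range d₁,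
          (flagA + algebraMap ℂ FlagCohomology (((k : ℂ) + 1) * h))) ^ 3 *
        Ring.inverse (∏ k ∈ Finset.range d₂,
          (flagB + algebraMap ℂ FlagCohomology (((k : ℂ) + 1) * h))) ^ 3)
    (hA0 : ∀ d₁ d₂ : ℤ, d₁ < 0 ∨ d₂ < 0 → A d₁ d₂ = 0)
    -- `J = ∑ a_{d₁,d₂} q₁^{d₁} q₂^{d₂}`
    (J : MvPowerSeries (Fin 2) FlagCohomology)
    (hJ : ∀ s : Fin 2 →₀ ℕ, MvPowerSeries.coeff s J = A (s 0) (s 1))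
    -- the operators `E_a`, `E_b` multiplying the coefficient of `q₁^{d₁} q₂^{d₂}`
    -- by `a + d₁·h` and `b + d₂·h` respectively
    (Ea Eb : MvPowerSeries (Fin 2) FlagCohomology → MvPowerSeries (Fin 2) FlagCohomology)
    (hEa : ∀ F s, MvPowerSeries.coeff s (Ea F) =
      (flagA + algebraMap ℂ FlagCohomology ((s 0 : ℂ) * h)) * MvPowerSeries.coeff s F)
    (hEb : ∀ F s, MvPowerSeries.coeff s (Eb F) =
      (flagB + algebraMap ℂ FlagCohomology ((s 1 : ℂ) * h)) * MvPowerSeries.coeff s F) :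
    -- `(E_a² + E_b² − E_a E_b) J = (q₁ + q₂) J`
    Ea (Ea J) + Eb (Eb J) - Ea (Eb J)
        = (MvPowerSeries.X 0 + MvPowerSeries.X 1) * J ∧
    -- equivalently, the coefficient recursion
    ∀ d₁ d₂ : ℤ, 0 ≤ d₁ → 0 ≤ d₂ → ¬(d₁ = 0 ∧ d₂ = 0) →
      A d₁ d₂ *
        ((flagA + algebraMap ℂ FlagCohomology ((d₁ : ℂ) * h)) ^ 2
          + (flagB + algebraMap ℂ FlagCohomology ((d₂ : ℂ) * h)) ^ 2
          - (flagA + algebraMap ℂ FlagCohomology ((d₁ : ℂ) * h))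
              * (flagB + algebraMap ℂ FlagCohomology ((d₂ : ℂ) * h)))
        = A (d₁ - 1) d₂ + A d₁ (d₂ - 1) := by
  set ħ := algebraMap ℂ FlagCohomology h
  have hscalar (z : ℂ) : algebraMap ℂ FlagCohomology (z * h) = algebraMap ℂ FlagCohomology z * ħ :=
    map_mul _ _ _
  have hunit {r : FlagCohomology} (hr : IsNilpotent r) (n : ℕ) :
      IsUnit (r + ((n : FlagCohomology) + 1) * ħ) :=
    hr.isUnit_add_natCast_succ_mul hh n
  have hnilA : IsNilpotent flagA := ⟨3, flagA_pow_three⟩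
  have hnilB : IsNilpotent flagB := ⟨3, flagB_pow_three⟩
  have hrec := coeff_recursion flagA_pow_three flagB_pow_three flagA_sq_sub_mul_add_sq
    (hunit hnilA) (hunit hnilB) (hunit ((Commute.all _ _).isNilpotent_add hnilA hnilB))
    (fun d₁ d₂ => by simp only [hA, hscalar, map_add, map_natCast, map_one, jCoeff]) hA0
  simp only [hscalar, map_natCast] at hEa hEb ⊢
  constructor
  · ext s
    rw [add_mul, map_sub, map_add, map_add,
      coeff_X_zero_mul_of_coeff (fun d₂ => hA0 _ d₂ (by omega)) hJ,
      coeff_X_one_mul_of_coeff (fun d₁ => hA0 d₁ _ (by omega)) hJ]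
    simp only [hEa, hEb, hJ]
    linear_combination hrec (s 0) (s 1)
  · intro d₁ d₂ h₁ h₂ _
    lift d₁ to ℕ using h₁
    lift d₂ to ℕ using h₂
    exact_mod_cast hrec d₁ d₂
end Recursion
end

section
/- Let V be a finite-dimensional complex normed vector space, h a nonzero complex number, and let J₀, J₁, J₂, J₃, J₄, J₅ : ℝ² → V be infinitely differentiable functions of (t₁,t₂) satisfying the twelve first-order equations (with q₁ = e^{t₁}, q₂ = e^{t₂}): h∂₁J₀ = q₁J₁ + q₁q₂J₅, h∂₁J₁ = J₀, h∂₁J₂ = q₁J₃, h∂₁J₃ = J₁ + J₂, h∂₁J₄ = J₂ + q₁J₅, h∂₁J₅ = J₄, and h∂₂J₀ = q₂J₂ + q₁q₂J₅, h∂₂J₁ = q₂J₄, h∂₂J₂ = J₀, h∂₂J₃ = J₁ + q₂J₅, h∂₂J₄ = J₁ + J₂, h∂₂J₅ = J₃. Then, writing J = J₅, one has J₀ = h³∂₁²∂₂J − q₁h∂₂J, J₁ = h²∂₁∂₂J − h²∂₁²J + q₁J, J₂ = h²∂₁²J − q₁J, J₃ = h∂₂J, J₄ = h∂₁J, and J satisfies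 the quantum differential equations (h²∂₁² + h²∂₂² − h²∂₁∂₂ − q₁ − q₂)J = 0 and (h³∂₁∂₂² − h³∂₁²∂₂ − q₂h∂₁ + q₁h∂₂)J = 0. -/
/-- Partial derivative with respect to the first variable. -/
noncomputable def pd1 {V : Type*} [NormedAddCommGroup V] [NormedSpace ℝ V]
    (f : ℝ × ℝ → V) : ℝ × ℝ → V :=
  fun p => deriv (fun s => f (s, p.2)) p.1

/-- Partial derivative with respect to the second variable. -/
noncomputable def pd2 {V : Type*} [NormedAddCommGroup V] [NormedSpace ℝ V]
    (f : ℝ × ℝ → V) : ℝ × ℝ → V :=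
  fun p => deriv (fun s => f (p.1, s)) p.2


section Helpers

variable {V : Type*} [NormedAddCommGroup V] [NormedSpace ℂ V]

lemma sliceDiff1 {f : ℝ × ℝ → V} (hf : ContDiff ℝ (⊤ : ℕ∞) f) (p : ℝ × ℝ) :
    DifferentiableAt ℝ (fun s => f (s, p.2)) p.1 :=
  ((hf.differentiable (by simp)) (p.1, p.2)).comp p.1
    (differentiableAt_id.prodMk (differentiableAt_const _))

lemma sliceDiff2 {f : ℝ × ℝ → V} (hf : ContDiff ℝ (⊤ : ℕ∞) f) (p : ℝ × ℝ) :
    DifferentiableAt ℝ (fun s => f (p.1, s)) p.2 :=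
  ((hf.differentiable (by simp)) (p.1, p.2)).comp p.2
    ((differentiableAt_const _).prodMk differentiableAt_id)

end Helpers

theorem stmt_6 {V : Type*} [NormedAddCommGroup V] [NormedSpace ℂ V]
    [FiniteDimensional ℂ V] (h : ℂ) (hh : h ≠ 0)
    (J0 J1 J2 J3 J4 J5 : ℝ × ℝ → V)
    (hs0 : ContDiff ℝ (⊤ : ℕ∞) J0) (hs1 : ContDiff ℝ (⊤ : ℕ∞) J1) (hs2 : ContDiff ℝ (⊤ : ℕ∞) J2)
    (hs3 : ContDiff ℝ (⊤ : ℕ∞) J3) (hs4 : ContDiff ℝ (⊤ : ℕ∞) J4) (hs5 : ContDiff ℝ (⊤ : ℕ∞) J5)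
    -- the system h ∂₁ H = M₁ H
    (e10 : ∀ p : ℝ × ℝ, h • pd1 J0 p
      = (Real.exp p.1 : ℂ) • J1 p + ((Real.exp p.1 * Real.exp p.2 : ℝ) : ℂ) • J5 p)
    (e11 : ∀ p : ℝ × ℝ, h • pd1 J1 p = J0 p)
    (e12 : ∀ p : ℝ × ℝ, h • pd1 J2 p = (Real.exp p.1 : ℂ) • J3 p)
    (e13 : ∀ p : ℝ × ℝ, h • pd1 J3 p = J1 p + J2 p)
    (e14 : ∀ p : ℝ × ℝ, h • pd1 J4 p = J2 p + (Real.exp p.1 : ℂ) • J5 p)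
    (e15 : ∀ p : ℝ × ℝ, h • pd1 J5 p = J4 p)
    -- the system h ∂₂ H = M₂ H
    (e20 : ∀ p : ℝ × ℝ, h • pd2 J0 p
      = (Real.exp p.2 : ℂ) • J2 p + ((Real.exp p.1 * Real.exp p.2 : ℝ) : ℂ) • J5 p)
    (e21 : ∀ p : ℝ × ℝ, h • pd2 J1 p = (Real.exp p.2 : ℂ) • J4 p)
    (e22 : ∀ p : ℝ × ℝ, h • pd2 J2 p = J0 p)
    (e23 : ∀ p : ℝ × ℝ, h • pd2 J3 p = J1 p + (Real.exp p.2 : ℂ) • J5 p)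
    (e24 : ∀ p : ℝ × ℝ, h • pd2 J4 p = J1 p + J2 p)
    (e25 : ∀ p : ℝ × ℝ, h • pd2 J5 p = J3 p) :
    -- J₀,…,J₄ in terms of J = J₅
    (∀ p : ℝ × ℝ, J0 p
      = h ^ 3 • pd1 (pd1 (pd2 J5)) p - ((Real.exp p.1 : ℂ) * h) • pd2 J5 p) ∧
    (∀ p : ℝ × ℝ, J1 p
      = h ^ 2 • pd1 (pd2 J5) p - h ^ 2 • pd1 (pd1 J5) p + (Real.exp p.1 : ℂ) • J5 p) ∧
    (∀ p : ℝ × ℝ, J2 p = h ^ 2 • pd1 (pd1 J5) p - (Real.exp p.1 : ℂ) • J5 p) ∧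
    (∀ p : ℝ × ℝ, J3 p = h • pd2 J5 p) ∧
    (∀ p : ℝ × ℝ, J4 p = h • pd1 J5 p) ∧
    -- the quantum differential equation D₁ J = 0
    (∀ p : ℝ × ℝ, h ^ 2 • pd1 (pd1 J5) p + h ^ 2 • pd2 (pd2 J5) p
        - h ^ 2 • pd1 (pd2 J5) p - (Real.exp p.1 : ℂ) • J5 p - (Real.exp p.2 : ℂ) • J5 p
      = 0) ∧
    -- the quantum differential equation D₂ J = 0
    (∀ p : ℝ × ℝ, h ^ 3 • pd1 (pd2 (pd2 J5)) p - h ^ 3 • pd1 (pd1 (pd2 J5)) p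
        - ((Real.exp p.2 : ℂ) * h) • pd1 J5 p + ((Real.exp p.1 : ℂ) * h) • pd2 J5 p
      = 0) := by

  classical
  -- first derivatives of J5
  have hinv : ∀ (v w : V), h • v = w → v = h⁻¹ • w := by
    intro v w e; rw [← e, inv_smul_smul₀ hh]
  have E15 : pd1 J5 = fun p => h⁻¹ • J4 p := funext fun p => hinv _ _ (e15 p)
  have E25 : pd2 J5 = fun p => h⁻¹ • J3 p := funext fun p => hinv _ _ (e25 p)
  -- second derivatives
  have P11 : ∀ p, pd1 (pd1 J5) p = h⁻¹ • pd1 J4 p := by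
    intro p
    rw [E15]
    show deriv (fun s => h⁻¹ • J4 (s, p.2)) p.1 = _
    exact deriv_const_smul _ (sliceDiff1 hs4 p)
  have P12 : ∀ p, pd1 (pd2 J5) p = h⁻¹ • pd1 J3 p := by
    intro p
    rw [E25]
    show deriv (fun s => h⁻¹ • J3 (s, p.2)) p.1 = _
    exact deriv_const_smul _ (sliceDiff1 hs3 p)
  have P22 : ∀ p, pd2 (pd2 J5) p = h⁻¹ • pd2 J3 p := by
    intro p
    rw [E25]
    show deriv (fun s => h⁻¹ • J3 (p.1, s)) p.2 = _
    exact deriv_const_smul _ (sliceDiff2 hs3 p)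
  -- function forms of mixed second derivatives
  have F12 : pd1 (pd2 J5) = fun p => (h⁻¹ * h⁻¹) • (J1 p + J2 p) := by
    funext p
    rw [P12 p, hinv _ _ (e13 p), smul_smul]
  have F22 : pd2 (pd2 J5) = fun p => (h⁻¹ * h⁻¹) • (J1 p + (Real.exp p.2 : ℂ) • J5 p) := by
    funext p
    rw [P22 p, hinv _ _ (e23 p), smul_smul]
  -- third derivatives
  have Q112 : ∀ p, pd1 (pd1 (pd2 J5)) p = (h⁻¹ * h⁻¹) • (pd1 J1 p + pd1 J2 p) := by
    intro p
    rw [F12]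
    show deriv (fun s => (h⁻¹ * h⁻¹) • (J1 (s, p.2) + J2 (s, p.2))) p.1 = _
    rw [deriv_fun_const_smul _ ((sliceDiff1 hs1 p).fun_add (sliceDiff1 hs2 p)),
      deriv_fun_add (sliceDiff1 hs1 p) (sliceDiff1 hs2 p)]
    rfl
  have Q122 : ∀ p, pd1 (pd2 (pd2 J5)) p
      = (h⁻¹ * h⁻¹) • (pd1 J1 p + (Real.exp p.2 : ℂ) • pd1 J5 p) := by
    intro p
    rw [F22]
    show deriv (fun s => (h⁻¹ * h⁻¹) • (J1 (s, p.2) + (Real.exp p.2 : ℂ) • J5 (s, p.2))) p.1 = _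
    rw [deriv_fun_const_smul _ ((sliceDiff1 hs1 p).fun_add ((sliceDiff1 hs5 p).fun_const_smul _)),
      deriv_fun_add (sliceDiff1 hs1 p) ((sliceDiff1 hs5 p).fun_const_smul _),
      deriv_fun_const_smul _ (sliceDiff1 hs5 p)]
    rfl
  -- clean forms
  have hA : ∀ p, h ^ 2 • pd1 (pd1 J5) p = J2 p + (Real.exp p.1 : ℂ) • J5 p := by
    intro p
    rw [P11 p, smul_smul, show h ^ 2 * h⁻¹ = h by field_simp, e14]
  have hB : ∀ p, h ^ 2 • pd1 (pd2 J5) p = J1 p + J2 p := by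
    intro p
    rw [P12 p, smul_smul, show h ^ 2 * h⁻¹ = h by field_simp, e13]
  have hC : ∀ p, h ^ 2 • pd2 (pd2 J5) p = J1 p + (Real.exp p.2 : ℂ) • J5 p := by
    intro p
    rw [P22 p, smul_smul, show h ^ 2 * h⁻¹ = h by field_simp, e23]
  have hD : ∀ p, h ^ 3 • pd1 (pd1 (pd2 J5)) p = J0 p + (Real.exp p.1 : ℂ) • J3 p := by
    intro p
    rw [Q112 p, smul_smul, show h ^ 3 * (h⁻¹ * h⁻¹) = h by field_simp,
      smul_add, e11, e12]
  have hE : ∀ p, h ^ 3 • pd1 (pd2 (pd2 J5)) p = J0 p + (Real.exp p.2 : ℂ) • J4 p := by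
    intro p
    rw [Q122 p, smul_smul, show h ^ 3 * (h⁻¹ * h⁻¹) = h by field_simp,
      smul_add, e11, smul_comm h, e15]
  refine ⟨?_, ?_, ?_, ?_, ?_, ?_, ?_⟩
  · intro p
    rw [hD p, mul_smul, e25]
    abel
  · intro p
    rw [hB p, hA p]
    abel
  · intro p
    rw [hA p]
    abel
  · exact fun p => (e25 p).symm
  · exact fun p => (e15 p).symm
  · intro p
    rw [hA p, hB p, hC p]
    abel
  · intro p
    rw [hD p, hE p, mul_smul, mul_smul, e15, e25]
    abel
end

section
/- Let V be a finite-dimensional complex normed vector space, h a nonzero complex number, and let J : ℝ² → V be an infinitely differentiable function of (t₁,t₂) satisfying (with q₁ = e^{t₁}, q₂ = e^{t₂}): (1) h²∂₁²J + h²∂₂²J − h²∂₁∂₂J − q₁J − q₂J = 0 and (2) h³∂₁∂₂²J − h³∂₁²∂₂J − q₂h∂₁J + q₁h∂₂J = 0. Then J also satisfies: (3) h³∂₁³J − q₁h∂₁J − q₁h∂₂J = q₁hJ; (4) h⁴∂₁³∂₂J − 2q₁h²∂₁∂₂J + q₁h²∂₁²J − q₁²J − q₁q₂J = q₁h²∂₂J;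 and (5) h⁴∂₁²∂₂²J − q₁h²∂₂²J − q₂h²∂₁²J = 0. -/
section Helpers
variable {V : Type*} [NormedAddCommGroup V] [NormedSpace ℂ V]

lemma sect1_diff {g : ℝ × ℝ → V} (hg : ContDiff ℝ (⊤ : ℕ∞) g) (p : ℝ × ℝ) :
    DifferentiableAt ℝ (fun s => g (s, p.2)) p.1 :=
  ((hg.differentiable (by simp)).comp
    (differentiable_id.prodMk (differentiable_const _))).differentiableAt

lemma sect2_diff {g : ℝ × ℝ → V} (hg : ContDiff ℝ (⊤ : ℕ∞) g) (p : ℝ × ℝ) :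
    DifferentiableAt ℝ (fun s => g (p.1, s)) p.2 :=
  ((hg.differentiable (by simp)).comp
    ((differentiable_const _).prodMk differentiable_id)).differentiableAt

lemma sect1_hasDerivAt {g : ℝ × ℝ → V} (hg : ContDiff ℝ (⊤ : ℕ∞) g) (p : ℝ × ℝ) :
    HasDerivAt (fun s => g (s, p.2)) (pd1 g p) p.1 :=
  (sect1_diff hg p).hasDerivAt

lemma sect2_hasDerivAt {g : ℝ × ℝ → V} (hg : ContDiff ℝ (⊤ : ℕ∞) g) (p : ℝ × ℝ) :
    HasDerivAt (fun s => g (p.1, s)) (pd2 g p) p.2 :=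
  (sect2_diff hg p).hasDerivAt

lemma pd1_eq {g : ℝ × ℝ → V} (hg : Differentiable ℝ g) (p : ℝ × ℝ) :
    pd1 g p = fderiv ℝ g p ((1 : ℝ), (0 : ℝ)) := by
  have h1 : HasDerivAt (fun s : ℝ => (s, p.2)) ((1 : ℝ), (0 : ℝ)) p.1 :=
    HasDerivAt.prodMk (hasDerivAt_id p.1) (hasDerivAt_const p.1 p.2)
  have := ((hg p).hasFDerivAt.comp_hasDerivAt_of_eq p.1 h1 rfl)
  exact this.deriv

lemma pd2_eq {g : ℝ × ℝ → V} (hg : Differentiable ℝ g) (p : ℝ × ℝ) :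
    pd2 g p = fderiv ℝ g p ((0 : ℝ), (1 : ℝ)) := by
  have h1 : HasDerivAt (fun s : ℝ => (p.1, s)) ((0 : ℝ), (1 : ℝ)) p.2 :=
    HasDerivAt.prodMk (hasDerivAt_const p.2 p.1) (hasDerivAt_id p.2)
  have := ((hg p).hasFDerivAt.comp_hasDerivAt_of_eq p.2 h1 rfl)
  exact this.deriv

lemma contDiff_pd1 {g : ℝ × ℝ → V} (hg : ContDiff ℝ (⊤ : ℕ∞) g) : ContDiff ℝ (⊤ : ℕ∞) (pd1 g) := by
  have : pd1 g = fun p => fderiv ℝ g p ((1 : ℝ), (0 : ℝ)) :=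
    funext (pd1_eq (hg.differentiable (by simp)))
  rw [this]
  exact (hg.fderiv_right (by simp)).clm_apply contDiff_const

lemma contDiff_pd2 {g : ℝ × ℝ → V} (hg : ContDiff ℝ (⊤ : ℕ∞) g) : ContDiff ℝ (⊤ : ℕ∞) (pd2 g) := by
  have : pd2 g = fun p => fderiv ℝ g p ((0 : ℝ), (1 : ℝ)) :=
    funext (pd2_eq (hg.differentiable (by simp)))
  rw [this]
  exact (hg.fderiv_right (by simp)).clm_apply contDiff_const

lemma pd1_pd2_comm {g : ℝ × ℝ → V} (hg : ContDiff ℝ (⊤ : ℕ∞) g) :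
    pd1 (pd2 g) = pd2 (pd1 g) := by
  funext p
  have hdg : Differentiable ℝ g := hg.differentiable (by simp)
  have hfd : ContDiff ℝ (⊤ : ℕ∞) (fderiv ℝ g) := hg.fderiv_right (by simp)
  have hfdd : Differentiable ℝ (fderiv ℝ g) := hfd.differentiable (by simp)
  have h2 : pd2 g = fun q => fderiv ℝ g q ((0 : ℝ), (1 : ℝ)) := funext (pd2_eq hdg)
  have h1 : pd1 g = fun q => fderiv ℝ g q ((1 : ℝ), (0 : ℝ)) := funext (pd1_eq hdg)
  rw [pd1_eq ((contDiff_pd2 hg).differentiable (by simp)) p,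
      pd2_eq ((contDiff_pd1 hg).differentiable (by simp)) p, h1, h2]
  rw [fderiv_clm_apply (hfdd p) (differentiableAt_const _),
      fderiv_clm_apply (hfdd p) (differentiableAt_const _)]
  simp only [fderiv_const, fderiv_fun_const, Pi.zero_apply, ContinuousLinearMap.comp_zero, zero_add,
    ContinuousLinearMap.add_apply, ContinuousLinearMap.flip_apply]
  exact second_derivative_symmetric (fun y => (hdg y).hasFDerivAt) (hfdd p).hasFDerivAt _ _

lemma pd1_zero_of {F : ℝ × ℝ → V} (hF : ∀ p, F p = 0) (p : ℝ × ℝ) : pd1 F p = 0 := by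
  have : F = fun _ => (0 : V) := funext hF
  rw [this]
  simp [pd1]

lemma pd2_zero_of {F : ℝ × ℝ → V} (hF : ∀ p, F p = 0) (p : ℝ × ℝ) : pd2 F p = 0 := by
  have : F = fun _ => (0 : V) := funext hF
  rw [this]
  simp [pd2]

lemma hasDerivAt_cexp (x : ℝ) :
    HasDerivAt (fun s : ℝ => (Real.exp s : ℂ)) (Real.exp x : ℂ) x :=
  (Real.hasDerivAt_exp x).ofReal_comp

end Helpers

theorem stmt_7 {V : Type*} [NormedAddCommGroup V] [NormedSpace ℂ V]
    [FiniteDimensional ℂ V] (h : ℂ) (hh : h ≠ 0)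
    (J : ℝ × ℝ → V) (hs : ContDiff ℝ (⊤ : ℕ∞) J)
    -- (1)  h²∂₁²J + h²∂₂²J − h²∂₁∂₂J − q₁J − q₂J = 0
    (e1 : ∀ p : ℝ × ℝ, h ^ 2 • pd1 (pd1 J) p + h ^ 2 • pd2 (pd2 J) p
        - h ^ 2 • pd1 (pd2 J) p - (Real.exp p.1 : ℂ) • J p - (Real.exp p.2 : ℂ) • J p = 0)
    -- (2)  h³∂₁∂₂²J − h³∂₁²∂₂J − q₂h∂₁J + q₁h∂₂J = 0
    (e2 : ∀ p : ℝ × ℝ, h ^ 3 • pd1 (pd2 (pd2 J)) p - h ^ 3 • pd1 (pd1 (pd2 J)) p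
        - ((Real.exp p.2 : ℂ) * h) • pd1 J p + ((Real.exp p.1 : ℂ) * h) • pd2 J p = 0) :
    -- (3)  h³∂₁³J − q₁h∂₁J − q₁h∂₂J = q₁hJ
    (∀ p : ℝ × ℝ, h ^ 3 • pd1 (pd1 (pd1 J)) p - ((Real.exp p.1 : ℂ) * h) • pd1 J p
        - ((Real.exp p.1 : ℂ) * h) • pd2 J p = ((Real.exp p.1 : ℂ) * h) • J p) ∧
    -- (4)  h⁴∂₁³∂₂J − 2q₁h²∂₁∂₂J + q₁h²∂₁²J − q₁²J − q₁q₂J = q₁h²∂₂J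
    (∀ p : ℝ × ℝ, h ^ 4 • pd1 (pd1 (pd1 (pd2 J))) p
        - (2 * (Real.exp p.1 : ℂ) * h ^ 2) • pd1 (pd2 J) p
        + ((Real.exp p.1 : ℂ) * h ^ 2) • pd1 (pd1 J) p
        - ((Real.exp p.1 : ℂ) ^ 2) • J p
        - ((Real.exp p.1 : ℂ) * (Real.exp p.2 : ℂ)) • J p
      = ((Real.exp p.1 : ℂ) * h ^ 2) • pd2 J p) ∧
    -- (5)  h⁴∂₁²∂₂²J − q₁h²∂₂²J − q₂h²∂₁²J = 0
    (∀ p : ℝ × ℝ, h ^ 4 • pd1 (pd1 (pd2 (pd2 J))) p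
        - ((Real.exp p.1 : ℂ) * h ^ 2) • pd2 (pd2 J) p
        - ((Real.exp p.2 : ℂ) * h ^ 2) • pd1 (pd1 J) p = 0) := by
  have c1 : ContDiff ℝ (⊤ : ℕ∞) (pd1 J) := contDiff_pd1 hs
  have c2 : ContDiff ℝ (⊤ : ℕ∞) (pd2 J) := contDiff_pd2 hs
  have c11 : ContDiff ℝ (⊤ : ℕ∞) (pd1 (pd1 J)) := contDiff_pd1 c1
  have c12 : ContDiff ℝ (⊤ : ℕ∞) (pd1 (pd2 J)) := contDiff_pd1 c2
  have c22 : ContDiff ℝ (⊤ : ℕ∞) (pd2 (pd2 J)) := contDiff_pd2 c2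
  have c111 : ContDiff ℝ (⊤ : ℕ∞) (pd1 (pd1 (pd1 J))) := contDiff_pd1 c11
  have c112 : ContDiff ℝ (⊤ : ℕ∞) (pd1 (pd1 (pd2 J))) := contDiff_pd1 c12
  have c122 : ContDiff ℝ (⊤ : ℕ∞) (pd1 (pd2 (pd2 J))) := contDiff_pd1 c22
  -- (3)
  have g3 : ∀ p : ℝ × ℝ, h ^ 3 • pd1 (pd1 (pd1 J)) p - ((Real.exp p.1 : ℂ) * h) • pd1 J p
      - ((Real.exp p.1 : ℂ) * h) • pd2 J p = ((Real.exp p.1 : ℂ) * h) • J p := by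
    intro p
    have A : HasDerivAt
        (fun s => h ^ 2 • pd1 (pd1 J) (s, p.2) + h ^ 2 • pd2 (pd2 J) (s, p.2)
          - h ^ 2 • pd1 (pd2 J) (s, p.2) - (Real.exp s : ℂ) • J (s, p.2)
          - (Real.exp p.2 : ℂ) • J (s, p.2))
        (h ^ 2 • pd1 (pd1 (pd1 J)) p + h ^ 2 • pd1 (pd2 (pd2 J)) p
          - h ^ 2 • pd1 (pd1 (pd2 J)) p
          - ((Real.exp p.1 : ℂ) • pd1 J p + (Real.exp p.1 : ℂ) • J p)
          - (Real.exp p.2 : ℂ) • pd1 J p) p.1 :=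
      (((((sect1_hasDerivAt c11 p).const_smul (h ^ 2)).add
          ((sect1_hasDerivAt c22 p).const_smul (h ^ 2))).sub
          ((sect1_hasDerivAt c12 p).const_smul (h ^ 2))).sub
          ((hasDerivAt_cexp p.1).smul (sect1_hasDerivAt hs p))).sub
          ((sect1_hasDerivAt hs p).const_smul ((Real.exp p.2 : ℂ)))
    have d1e1 := A.deriv.symm.trans (pd1_zero_of e1 p)
    linear_combination (norm := module) h • d1e1 - e2 p
  refine ⟨g3, ?_⟩
  have e3' : ∀ p : ℝ × ℝ, h ^ 3 • pd1 (pd1 (pd1 J)) p - ((Real.exp p.1 : ℂ) * h) • pd1 J p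
      - ((Real.exp p.1 : ℂ) * h) • pd2 J p - ((Real.exp p.1 : ℂ) * h) • J p = 0 := by
    intro p
    linear_combination (norm := module) g3 p
  have k1 : pd1 (pd2 J) = pd2 (pd1 J) := pd1_pd2_comm hs
  have k2 : pd1 (pd2 (pd1 J)) = pd2 (pd1 (pd1 J)) := pd1_pd2_comm c1
  have k3 : pd1 (pd2 (pd1 (pd1 J))) = pd2 (pd1 (pd1 (pd1 J))) := pd1_pd2_comm c11
  -- (4)
  have g4 : ∀ p : ℝ × ℝ, h ^ 4 • pd1 (pd1 (pd1 (pd2 J))) p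
      - (2 * (Real.exp p.1 : ℂ) * h ^ 2) • pd1 (pd2 J) p
      + ((Real.exp p.1 : ℂ) * h ^ 2) • pd1 (pd1 J) p
      - ((Real.exp p.1 : ℂ) ^ 2) • J p
      - ((Real.exp p.1 : ℂ) * (Real.exp p.2 : ℂ)) • J p
    = ((Real.exp p.1 : ℂ) * h ^ 2) • pd2 J p := by
    intro p
    have B : HasDerivAt
        (fun s => h ^ 3 • pd1 (pd1 (pd1 J)) (p.1, s)
          - ((Real.exp p.1 : ℂ) * h) • pd1 J (p.1, s)
          - ((Real.exp p.1 : ℂ) * h) • pd2 J (p.1, s)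
          - ((Real.exp p.1 : ℂ) * h) • J (p.1, s))
        (h ^ 3 • pd2 (pd1 (pd1 (pd1 J))) p
          - ((Real.exp p.1 : ℂ) * h) • pd2 (pd1 J) p
          - ((Real.exp p.1 : ℂ) * h) • pd2 (pd2 J) p
          - ((Real.exp p.1 : ℂ) * h) • pd2 J p) p.2 :=
      ((((sect2_hasDerivAt c111 p).const_smul (h ^ 3)).sub
          ((sect2_hasDerivAt c1 p).const_smul ((Real.exp p.1 : ℂ) * h))).sub
          ((sect2_hasDerivAt c2 p).const_smul ((Real.exp p.1 : ℂ) * h))).sub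
          ((sect2_hasDerivAt hs p).const_smul ((Real.exp p.1 : ℂ) * h))
    have d2e3 := B.deriv.symm.trans (pd2_zero_of e3' p)
    rw [← k3, ← k2, ← k1] at d2e3
    linear_combination (norm := module) h • d2e3 + (Real.exp p.1 : ℂ) • e1 p
  refine ⟨g4, ?_⟩
  -- (5)
  intro p
  have A2 : HasDerivAt
      (fun s => h ^ 3 • pd1 (pd2 (pd2 J)) (s, p.2) - h ^ 3 • pd1 (pd1 (pd2 J)) (s, p.2)
        - ((Real.exp p.2 : ℂ) * h) • pd1 J (s, p.2)
        + ((Real.exp s : ℂ) * h) • pd2 J (s, p.2))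
      (h ^ 3 • pd1 (pd1 (pd2 (pd2 J))) p - h ^ 3 • pd1 (pd1 (pd1 (pd2 J))) p
        - ((Real.exp p.2 : ℂ) * h) • pd1 (pd1 J) p
        + (((Real.exp p.1 : ℂ) * h) • pd1 (pd2 J) p
          + ((Real.exp p.1 : ℂ) * h) • pd2 J p)) p.1 :=
    ((((sect1_hasDerivAt c122 p).const_smul (h ^ 3)).sub
        ((sect1_hasDerivAt c112 p).const_smul (h ^ 3))).sub
        ((sect1_hasDerivAt c1 p).const_smul ((Real.exp p.2 : ℂ) * h))).add
        (((hasDerivAt_cexp p.1).mul_const h).smul (sect1_hasDerivAt c2 p))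
  have d1e2 := A2.deriv.symm.trans (pd1_zero_of e2 p)
  linear_combination (norm := module) h • d1e2 + g4 p - (Real.exp p.1 : ℂ) • e1 p
end

section
/- Let V be a finite-dimensional complex normed vector space, h a nonzero complex number, and let J₀, J₁, J₂, J₃ : ℝ² → V be infinitely differentiable functions of (t₁,t₂) satisfying the eight first-order equations (with r₁ = e^{t₁}, r₂ = e^{t₂}): h∂₁J₀ = r₁r₂J₃, h∂₁J₁ = J₀ − r₁J₁, h∂₁J₂ = r₁J₁, h∂₁J₃ = J₂, and h∂₂J₀ = r₂J₂ + r₁r₂J₃, h∂₂J₁ = r₂J₃, h∂₂J₂ = J₀, h∂₂J₃ = J₁ + J₂. Then, writing J = J₃, one has J₀ = h²∂₁∂₂J, J₁ = h∂₂J − h∂₁J, J₂ = h∂₁J, and J satisfies the quantum differential equations (h²∂₂² − h²∂₁∂₂ − r₂)J = 0 and (h²∂₁² − r₁h∂₂ + r₁h∂₁)J = 0. -/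
section Aux
variable {V : Type*} [NormedAddCommGroup V] [NormedSpace ℂ V]

lemma diffAt1 {f : ℝ × ℝ → V} (hf : ContDiff ℝ (⊤ : ℕ∞) f) (x y : ℝ) :
    DifferentiableAt ℝ (fun s => f (s, y)) x :=
  (hf.differentiable (by simp) (x, y)).comp x
    (differentiableAt_id.prodMk (differentiableAt_const y))

lemma diffAt2 {f : ℝ × ℝ → V} (hf : ContDiff ℝ (⊤ : ℕ∞) f) (x y : ℝ) :
    DifferentiableAt ℝ (fun s => f (x, s)) y :=
  (hf.differentiable (by simp) (x, y)).comp y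
    ((differentiableAt_const x).prodMk differentiableAt_id)

lemma pd1_smul (c : ℂ) (f : ℝ × ℝ → V) (hf : ContDiff ℝ (⊤ : ℕ∞) f) (p : ℝ × ℝ) :
    pd1 (fun q => c • f q) p = c • pd1 f p := by
  simp only [pd1]
  exact deriv_const_smul c (diffAt1 hf p.1 p.2)

lemma pd2_smul (c : ℂ) (f : ℝ × ℝ → V) (hf : ContDiff ℝ (⊤ : ℕ∞) f) (p : ℝ × ℝ) :
    pd2 (fun q => c • f q) p = c • pd2 f p := by
  simp only [pd2]
  exact deriv_const_smul c (diffAt2 hf p.1 p.2)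

lemma pd1_smul_add (c : ℂ) (f g : ℝ × ℝ → V) (hf : ContDiff ℝ (⊤ : ℕ∞) f)
    (hg : ContDiff ℝ (⊤ : ℕ∞) g) (p : ℝ × ℝ) :
    pd1 (fun q => c • (f q + g q)) p = c • (pd1 f p + pd1 g p) := by
  simp only [pd1]
  rw [deriv_fun_const_smul (f := fun s => f (s, p.2) + g (s, p.2)) c ((diffAt1 hf p.1 p.2).add (diffAt1 hg p.1 p.2)),
    deriv_fun_add (diffAt1 hf p.1 p.2) (diffAt1 hg p.1 p.2)]

lemma pd2_smul_add (c : ℂ) (f g : ℝ × ℝ → V) (hf : ContDiff ℝ (⊤ : ℕ∞) f)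
    (hg : ContDiff ℝ (⊤ : ℕ∞) g) (p : ℝ × ℝ) :
    pd2 (fun q => c • (f q + g q)) p = c • (pd2 f p + pd2 g p) := by
  simp only [pd2]
  rw [deriv_fun_const_smul (f := fun s => f (p.1, s) + g (p.1, s)) c ((diffAt2 hf p.1 p.2).add (diffAt2 hg p.1 p.2)),
    deriv_fun_add (diffAt2 hf p.1 p.2) (diffAt2 hg p.1 p.2)]

end Aux

theorem stmt_12 {V : Type*} [NormedAddCommGroup V] [NormedSpace ℂ V]
    [FiniteDimensional ℂ V] (h : ℂ) (hh : h ≠ 0)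
    (J0 J1 J2 J3 : ℝ × ℝ → V)
    (hs0 : ContDiff ℝ (⊤ : ℕ∞) J0) (hs1 : ContDiff ℝ (⊤ : ℕ∞) J1)
    (hs2 : ContDiff ℝ (⊤ : ℕ∞) J2) (hs3 : ContDiff ℝ (⊤ : ℕ∞) J3)
    -- the system h ∂₁ H = M₁ H
    (e10 : ∀ p : ℝ × ℝ, h • pd1 J0 p = ((Real.exp p.1 * Real.exp p.2 : ℝ) : ℂ) • J3 p)
    (e11 : ∀ p : ℝ × ℝ, h • pd1 J1 p = J0 p - (Real.exp p.1 : ℂ) • J1 p)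
    (e12 : ∀ p : ℝ × ℝ, h • pd1 J2 p = (Real.exp p.1 : ℂ) • J1 p)
    (e13 : ∀ p : ℝ × ℝ, h • pd1 J3 p = J2 p)
    -- the system h ∂₂ H = M₂ H
    (e20 : ∀ p : ℝ × ℝ, h • pd2 J0 p
      = (Real.exp p.2 : ℂ) • J2 p + ((Real.exp p.1 * Real.exp p.2 : ℝ) : ℂ) • J3 p)
    (e21 : ∀ p : ℝ × ℝ, h • pd2 J1 p = (Real.exp p.2 : ℂ) • J3 p)
    (e22 : ∀ p : ℝ × ℝ, h • pd2 J2 p = J0 p)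
    (e23 : ∀ p : ℝ × ℝ, h • pd2 J3 p = J1 p + J2 p) :
    -- J₀, J₁, J₂ in terms of J = J₃
    (∀ p : ℝ × ℝ, J0 p = h ^ 2 • pd1 (pd2 J3) p) ∧
    (∀ p : ℝ × ℝ, J1 p = h • pd2 J3 p - h • pd1 J3 p) ∧
    (∀ p : ℝ × ℝ, J2 p = h • pd1 J3 p) ∧
    -- the quantum differential equation D₁ J = 0
    (∀ p : ℝ × ℝ, h ^ 2 • pd2 (pd2 J3) p - h ^ 2 • pd1 (pd2 J3) p
        - (Real.exp p.2 : ℂ) • J3 p = 0) ∧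
    -- the quantum differential equation D₂ J = 0
    (∀ p : ℝ × ℝ, h ^ 2 • pd1 (pd1 J3) p - ((Real.exp p.1 : ℂ) * h) • pd2 J3 p
        + ((Real.exp p.1 : ℂ) * h) • pd1 J3 p = 0) := by
  have hpow : h ^ 2 * h⁻¹ = h := by field_simp [pow_two]
  have hp1J3 : pd1 J3 = fun q => h⁻¹ • J2 q := funext fun q => by
    rw [← e13 q, inv_smul_smul₀ hh]
  have hp2J3 : pd2 J3 = fun q => h⁻¹ • (J1 q + J2 q) := funext fun q => by
    rw [← e23 q, inv_smul_smul₀ hh]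
  have A : ∀ p : ℝ × ℝ, h ^ 2 • pd1 (pd2 J3) p = J0 p := by
    intro p
    rw [hp2J3, pd1_smul_add h⁻¹ J1 J2 hs1 hs2 p, smul_smul, hpow, smul_add,
      e11 p, e12 p]
    abel
  have B : ∀ p : ℝ × ℝ, h ^ 2 • pd2 (pd2 J3) p
      = (Real.exp p.2 : ℂ) • J3 p + J0 p := by
    intro p
    rw [hp2J3, pd2_smul_add h⁻¹ J1 J2 hs1 hs2 p, smul_smul, hpow, smul_add,
      e21 p, e22 p]
  have C : ∀ p : ℝ × ℝ, h ^ 2 • pd1 (pd1 J3) p = (Real.exp p.1 : ℂ) • J1 p := by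
    intro p
    rw [hp1J3, pd1_smul h⁻¹ J2 hs2 p, smul_smul, hpow, e12 p]
  have K1 : ∀ p : ℝ × ℝ, J1 p = h • pd2 J3 p - h • pd1 J3 p := by
    intro p
    rw [e23 p, e13 p]
    abel
  refine ⟨fun p => (A p).symm, K1, fun p => (e13 p).symm, fun p => ?_, fun p => ?_⟩
  · rw [A p, B p]
    abel
  · rw [C p, K1 p, smul_sub, mul_smul, mul_smul]
    abel
end
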